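/- Let n ≥ 2 and let S_1,...,S_n be a partition of T_{2n} into pairwise isomorphic plane spanning trees with v_iw_i ∈ E(S_i). Then there exists k ∈ {1,...,n} such that S_n = A_k, where A_k is the balanced double star with center edge v_nw_n in which v_n is adjacent exactly to v_1,...,v_{n−k} and w_n, w_{n−1},...,w_{n−k+1}, and w_n is adjacent exactly to w_1,...,w_{n−k} and v_n, v_{n−1},...,v_{n−k+1}. -/

import Mathlib

open SimpleGraph

/-- Two edges of the complete twisted graph cross: writing the edges as `{a,b}` and
`{c,d}` with `a < b` and `c < d` in the linear vertex order, they cross iff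
`a < c < d < b` or `c < a < b < d`. -/
def Cross {m : ℕ} (e f : Sym2 (Fin m)) : Prop :=
  ∃ a b c d : Fin m, a < b ∧ c < d ∧ e = s(a, b) ∧ f = s(c, d) ∧
    ((a < c ∧ d < b) ∨ (c < a ∧ b < d))

/-- A subgraph of the twisted graph is plane if no two of its edges cross. -/
def IsPlane {m : ℕ} (G : SimpleGraph (Fin m)) : Prop :=
  ∀ e ∈ G.edgeSet, ∀ f ∈ G.edgeSet, ¬ Cross e f

/-- A partition of the complete twisted graph `T_{2n}` into plane spanning trees:
`n` plane spanning trees such that every edge of the complete graph lies in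
exactly one of them. -/
def IsTwistedPartition {n : ℕ} (S : Fin n → SimpleGraph (Fin (2 * n))) : Prop :=
  (∀ i, (S i).IsTree ∧ IsPlane (S i)) ∧
    ∀ u v : Fin (2 * n), u ≠ v → ∃! i, (S i).Adj u v

/-- The vertex `v_i` (1-indexed) of `T_{2n}`, i.e. vertex number `i - 1` in the
linear order `v_1 < v_2 < ... < v_n < w_n < ... < w_1`. -/
def vv (n : ℕ) (hn : 0 < n) (i : ℕ) : Fin (2 * n) :=
  ⟨(i - 1) % (2 * n), Nat.mod_lt _ (by omega)⟩

/-- The vertex `w_i` (1-indexed) of `T_{2n}`, i.e. vertex number `2n - i` in the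
linear order `v_1 < v_2 < ... < v_n < w_n < ... < w_1`. -/
def ww (n : ℕ) (hn : 0 < n) (i : ℕ) : Fin (2 * n) :=
  ⟨(2 * n - i) % (2 * n), Nat.mod_lt _ (by omega)⟩
/-- The spanning balanced double star `A_k` of `T_{2n}` with center edge `v_n w_n`,
in which `v_n` is adjacent to `v_1, ..., v_{n-k}` and `w_n, w_{n-1}, ..., w_{n-k+1}`,
and `w_n` is adjacent to `w_1, ..., w_{n-k}` and `v_n, v_{n-1}, ..., v_{n-k+1}`. -/
def Ak (n : ℕ) (hn : 0 < n) (k : ℕ) : SimpleGraph (Fin (2 * n)) :=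
  SimpleGraph.fromEdgeSet
    ({s(vv n hn n, ww n hn n)} ∪
      {e | ∃ j, 1 ≤ j ∧ j ≤ n - k ∧
        (e = s(vv n hn n, vv n hn j) ∨ e = s(ww n hn n, ww n hn j))} ∪
      {e | ∃ j, n - k + 1 ≤ j ∧ j ≤ n - 1 ∧
        (e = s(vv n hn n, ww n hn j) ∨ e = s(ww n hn n, vv n hn j))})

/-- The spanning balanced double star `A'_i` of `T_{2n}` with center edge `v_i w_i`,
in which `v_i` is adjacent to `w_{i+1}, ..., w_n` and `v_1, ..., v_{i-1}`, and
`w_i` is adjacent to `v_{i+1}, ..., v_n` and `w_1, ..., w_{i-1}`. -/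
def A' (n : ℕ) (hn : 0 < n) (i : ℕ) : SimpleGraph (Fin (2 * n)) :=
  SimpleGraph.fromEdgeSet
    ({s(vv n hn i, ww n hn i)} ∪
      {e | ∃ j, i + 1 ≤ j ∧ j ≤ n ∧
        (e = s(vv n hn i, ww n hn j) ∨ e = s(ww n hn i, vv n hn j))} ∪
      {e | ∃ j, 1 ≤ j ∧ j ≤ i - 1 ∧
        (e = s(vv n hn i, vv n hn j) ∨ e = s(ww n hn i, ww n hn j))})

/-!
Every edge of `T_{2n}` other than the outermost one `v₁w₁` is nested inside it, so in the plane
tree `S₁` every edge meets `v₁` or `w₁`; by the isomorphism, `S_n` also has a vertex cover by the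
two ends of one of its edges. Since the `n` trees share the `2n - 1` edges at each vertex, every
vertex has degree between `1` and `n` in each tree, and counting then shows that the two cover
vertices have degree `n` and complementary neighbourhoods. A cover vertex off the middle edge
`v_n w_n` would have all its neighbours on its own side of that edge, which forces the cover to be
`{v_n, w_n}`. Finally, planarity makes the neighbours of `v_n` on either side of the middle edge an
initial segment, and the degree count pins them down to those of some `A_k`.
-/

open Finset

namespace SimpleGraph

variable {V : Type*}

theorem le_of_isVertexCover_pair {G G' : SimpleGraph V} {u v : V}
    (hG : G.IsVertexCover {u, v}) (hu : ∀ x, G.Adj u x → G'.Adj u x)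
    (hv : ∀ x, G.Adj v x → G'.Adj v x) : G ≤ G' := by
  intro x y hxy
  rcases hG hxy with (rfl | rfl) | (rfl | rfl)
  · exact hu y hxy
  · exact hv y hxy
  · exact (hu x hxy.symm).symm
  · exact (hv x hxy.symm).symm

theorem eq_of_isVertexCover_pair {G G' : SimpleGraph V} {u v : V}
    (hG : G.IsVertexCover {u, v}) (hG' : G'.IsVertexCover {u, v})
    (hu : ∀ x, G.Adj u x ↔ G'.Adj u x) (hv : ∀ x, G.Adj v x ↔ G'.Adj v x) : G = G' :=
  le_antisymm (le_of_isVertexCover_pair hG (fun x => (hu x).mp) (fun x => (hv x).mp))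
    (le_of_isVertexCover_pair hG' (fun x => (hu x).mpr) (fun x => (hv x).mpr))

theorem adj_of_neighborFinset_subset {G : SimpleGraph V} {v w : V}
    [Fintype (G.neighborSet v)] {s : Finset V} (hs : G.neighborFinset v ⊆ s)
    (hcard : #s ≤ G.degree v) (hw : w ∈ s) : G.Adj v w := by
  rw [← mem_neighborFinset,
    eq_of_subset_of_card_le hs (by rwa [card_neighborFinset_eq_degree])]
  exact hw

theorem degree_eq_and_adj_iff_of_isVertexCover_pair [Fintype V] [DecidableEq V]
    {G : SimpleGraph V} [DecidableRel G.Adj] {n : ℕ} (hV : Fintype.card V = 2 * n)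
    (hG : ∀ x, ¬ G.IsIsolated x) {u v : V} (huv : G.Adj u v) (hcover : G.IsVertexCover {u, v})
    (hu : G.degree u ≤ n) (hv : G.degree v ≤ n) :
    G.degree u = n ∧ ∀ x, G.Adj v x ↔ ¬ G.Adj u x := by
  have hunion : (univ : Finset V) ⊆ G.neighborFinset u ∪ G.neighborFinset v := by
    intro x _
    simp only [mem_union, mem_neighborFinset]
    obtain ⟨y, hxy⟩ := exists_adj_iff_not_isIsolated.mpr (hG x)
    rcases hcover hxy with (rfl | rfl) | (rfl | rfl)
    · exact Or.inr huv.symm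
    · exact Or.inl huv
    · exact Or.inl hxy.symm
    · exact Or.inr hxy.symm
  have hsum := card_union_add_card_inter (G.neighborFinset u) (G.neighborFinset v)
  have hle := card_le_card hunion
  rw [card_neighborFinset_eq_degree, card_neighborFinset_eq_degree] at hsum
  rw [card_univ, hV] at hle
  have hinter : G.neighborFinset u ∩ G.neighborFinset v = ∅ := card_eq_zero.mp (by omega)
  refine ⟨by omega, fun x => ⟨fun hvx hux => ?_, fun hux => ?_⟩⟩
  · have hx : x ∈ G.neighborFinset u ∩ G.neighborFinset v := by simp [hux, hvx]
    simp [hinter] at hx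
  · simpa [hux] using hunion (mem_univ x)

end SimpleGraph

theorem Fin.exists_forall_iff_val_lt {N : ℕ} {P : Fin N → Prop} {lo hi : ℕ} (hle : lo ≤ hi)
    (hP : ∀ x y : Fin N, lo ≤ y → y < x → x < hi → P x → P y) :
    ∃ a, lo ≤ a ∧ a ≤ hi ∧ ∀ x : Fin N, lo ≤ x → x < hi → (P x ↔ x < a) := by
  classical
  have hex : ∃ a, lo ≤ a ∧ (hi ≤ a ∨ ∃ x : Fin N, x = a ∧ ¬ P x) := ⟨hi, hle, Or.inl le_rfl⟩
  obtain ⟨hlo, hstop⟩ := Nat.find_spec hex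
  refine ⟨Nat.find hex, hlo, Nat.find_min' hex ⟨hle, Or.inl le_rfl⟩, fun x hlox hxhi => ⟨?_, ?_⟩⟩
  · intro hx
    by_contra! hax
    rcases hstop with hhi | ⟨y, hya, hy⟩
    · omega
    · rcases hax.eq_or_lt with hax | hax
      · exact hy (by rwa [Fin.ext (hya.trans hax)])
      · exact hy (hP x y (by omega) (by rw [Fin.lt_def]; omega) hxhi hx)
  · intro hxa
    by_contra hx
    exact Nat.find_min hex hxa ⟨hlox, Or.inr ⟨x, rfl, hx⟩⟩

theorem Fin.card_filter_val_lt_or_mem_Ico {N a b c : ℕ} (hab : a ≤ b) (hbc : b ≤ c)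
    (hc : c ≤ N) : #{x : Fin N | (x : ℕ) < a ∨ (b ≤ x ∧ (x : ℕ) < c)} = a + (c - b) := by
  have hmap : ({x : Fin N | (x : ℕ) < a ∨ (b ≤ x ∧ (x : ℕ) < c)} : Finset (Fin N)).map
      Fin.valEmbedding = range a ∪ Ico b c := by
    ext t
    simp only [mem_map, mem_filter, mem_univ, true_and, Fin.valEmbedding_apply, mem_union,
      mem_range, mem_Ico]
    constructor
    · rintro ⟨x, hx, rfl⟩
      exact hx
    · intro ht
      exact ⟨⟨t, by omega⟩, ht, rfl⟩
  rw [← card_map, hmap, card_union_of_disjoint (disjoint_left.mpr fun t h1 h2 => by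
    simp only [mem_range, mem_Ico] at h1 h2; omega), card_range, Nat.card_Ico]

section Twisted

variable {n : ℕ}

theorem val_vv (hn : 0 < n) {j : ℕ} (hj : j ≤ 2 * n) : (vv n hn j : ℕ) = j - 1 :=
  Nat.mod_eq_of_lt (by omega)

theorem val_ww (hn : 0 < n) {j : ℕ} (hj : 1 ≤ j) : (ww n hn j : ℕ) = 2 * n - j :=
  Nat.mod_eq_of_lt (by omega)

theorem vv_val_add_one (hn : 0 < n) (x : Fin (2 * n)) : vv n hn (x + 1) = x :=
  Fin.ext (by rw [val_vv hn (by omega)]; rfl)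

theorem ww_two_mul_sub_val (hn : 0 < n) (x : Fin (2 * n)) : ww n hn (2 * n - x) = x :=
  Fin.ext (by rw [val_ww hn (by omega)]; omega)

theorem isBot_vv_one (hn : 0 < n) : IsBot (vv n hn 1) :=
  fun x => Fin.le_def.mpr (by rw [val_vv hn (by omega)]; omega)

theorem isTop_ww_one (hn : 0 < n) : IsTop (ww n hn 1) :=
  fun x => Fin.le_def.mpr (by rw [val_ww hn le_rfl]; omega)

end Twisted

section Plane

variable {m : ℕ} {G : SimpleGraph (Fin m)}

theorem IsPlane.not_adj_of_nested (hG : IsPlane G) {a b c d : Fin m} (hcd : G.Adj c d)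
    (hca : c < a) (hab : a < b) (hbd : b < d) : ¬ G.Adj a b := fun hadj =>
  hG _ hadj _ hcd ⟨a, b, c, d, hab, hca.trans (hab.trans hbd), rfl, rfl, Or.inr ⟨hca, hbd⟩⟩

theorem IsPlane.isVertexCover_of_adj_of_isBot_of_isTop (hG : IsPlane G) {a b : Fin m}
    (hab : G.Adj a b) (ha : IsBot a) (hb : IsTop b) : G.IsVertexCover {a, b} := by
  intro x y hxy
  by_contra! h
  simp only [Set.mem_insert_iff, Set.mem_singleton_iff, not_or] at h
  obtain ⟨⟨hxa, hxb⟩, hya, hyb⟩ := h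
  rcases hxy.ne.lt_or_gt with hlt | hlt
  · exact hG.not_adj_of_nested hab ((ha x).lt_of_ne' hxa) hlt ((hb y).lt_of_ne hyb) hxy
  · exact hG.not_adj_of_nested hab ((ha y).lt_of_ne' hya) hlt ((hb x).lt_of_ne hxb) hxy.symm

end Plane

namespace IsTwistedPartition

variable {n : ℕ} {S : Fin n → SimpleGraph (Fin (2 * n))}

theorem not_isIsolated (hS : IsTwistedPartition S) (i : Fin n) (v : Fin (2 * n)) :
    ¬ (S i).IsIsolated v :=
  have : Nontrivial (Fin (2 * n)) := Fin.nontrivial_iff_two_le.mpr (by have := i.pos; omega)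
  (hS.1 i).1.connected.preconnected.not_isIsolated v

/-- Each of the `n` trees takes at least one of the `2n - 1` edges at `v`. -/
theorem degree_le (hS : IsTwistedPartition S) [∀ i, DecidableRel (S i).Adj] (i : Fin n)
    (v : Fin (2 * n)) : (S i).degree v ≤ n := by
  have hdisj : ((univ : Finset (Fin n)) : Set (Fin n)).PairwiseDisjoint
      fun j => (S j).neighborFinset v := by
    intro j _ j' _ hjj'
    refine disjoint_left.mpr fun y hj hj' => hjj' ?_
    rw [mem_neighborFinset] at hj hj'
    obtain ⟨_, -, huniq⟩ := hS.2 v y hj.ne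
    exact (huniq j hj).trans (huniq j' hj').symm
  have hsum : ∑ j, (S j).degree v ≤ 2 * n - 1 := by
    calc ∑ j, (S j).degree v = #(univ.biUnion fun j => (S j).neighborFinset v) := by
          simp only [card_biUnion hdisj, card_neighborFinset_eq_degree]
      _ ≤ #(univ.erase v) := card_le_card <| biUnion_subset.mpr fun j _ y hy =>
          mem_erase.mpr ⟨((mem_neighborFinset _ _ _).mp hy).ne', mem_univ y⟩
      _ = 2 * n - 1 := by simp
  have hothers : n - 1 ≤ ∑ j ∈ univ.erase i, (S j).degree v := by
    calc n - 1 = ∑ _j ∈ univ.erase i, 1 := by simp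
      _ ≤ _ := sum_le_sum fun j _ => ((S j).degree_pos v).mpr (hS.not_isIsolated j v)
  rw [← add_sum_erase _ _ (mem_univ i)] at hsum
  omega

end IsTwistedPartition

section Ak

variable {n : ℕ} (hn : 0 < n) {k : ℕ}

theorem Ak_isVertexCover : (Ak n hn k).IsVertexCover {vv n hn n, ww n hn n} := by
  intro x y hxy
  simp only [Ak, fromEdgeSet_adj, Set.mem_union, Set.mem_singleton_iff,
    Set.mem_ofPred_eq] at hxy
  have hmem : vv n hn n ∈ s(x, y) ∨ ww n hn n ∈ s(x, y) := by
    rcases hxy.1 with (h | ⟨j, -, -, h | h⟩) | ⟨j, -, -, h | h⟩ <;> simp [h]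
  simp only [Sym2.mem_iff] at hmem
  simp only [Set.mem_insert_iff, Set.mem_singleton_iff]
  rcases hmem with (h | h) | (h | h) <;> simp [h]

theorem Ak_adj_center (hk : 1 ≤ k) {c x : Fin (2 * n)} (hc : (c : ℕ) = n - 1 ∨ (c : ℕ) = n)
    (h : (Ak n hn k).Adj c x) :
    ((c : ℕ) = n - 1 ↔ (x : ℕ) < n - k ∨ (n ≤ (x : ℕ) ∧ (x : ℕ) < n + k)) := by
  have hv := val_vv hn (j := n) (by omega)
  have hw := val_ww hn (j := n) hn
  simp only [Ak, fromEdgeSet_adj, Set.mem_union, Set.mem_singleton_iff, Set.mem_ofPred_eq] at h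
  rcases h with ⟨(h | ⟨j, hj1, hj2, h | h⟩) | ⟨j, hj1, hj2, h | h⟩, -⟩
  · simp only [Sym2.eq_iff, Fin.ext_iff] at h
    omega
  all_goals
    have := val_vv hn (j := j) (by omega)
    have := val_ww hn (j := j) (by omega)
    simp only [Sym2.eq_iff, Fin.ext_iff] at h
    omega

theorem Ak_adj_vv (hk : 1 ≤ k) (x : Fin (2 * n)) :
    (Ak n hn k).Adj (vv n hn n) x ↔ (x : ℕ) < n - k ∨ (n ≤ (x : ℕ) ∧ (x : ℕ) < n + k) := by
  have hv := val_vv hn (j := n) (by omega)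
  refine ⟨fun h => (Ak_adj_center hn hk (Or.inl hv) h).mp hv, fun hx => ?_⟩
  simp only [Ak, fromEdgeSet_adj, Set.mem_union, Set.mem_singleton_iff, Set.mem_ofPred_eq]
  refine ⟨?_, fun h => by rw [← h] at hx; omega⟩
  rcases hx with hx | ⟨hx1, hx2⟩
  · exact Or.inl (Or.inr ⟨x + 1, by omega, by omega, Or.inl (by rw [vv_val_add_one])⟩)
  · rcases hx1.eq_or_lt with hx1 | hx1
    · have hw := val_ww hn (j := n) hn
      exact Or.inl (Or.inl (by rw [show x = ww n hn n from Fin.ext (by omega)]))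
    · exact Or.inr ⟨2 * n - x, by omega, by omega, Or.inl (by rw [ww_two_mul_sub_val])⟩

theorem Ak_adj_ww (hk : 1 ≤ k) (x : Fin (2 * n)) :
    (Ak n hn k).Adj (ww n hn n) x ↔ ¬ (Ak n hn k).Adj (vv n hn n) x := by
  have hv := val_vv hn (j := n) (by omega)
  have hw := val_ww hn (j := n) hn
  rw [Ak_adj_vv hn hk]
  refine ⟨fun h hx => ?_, fun hx => ?_⟩
  · have := (Ak_adj_center hn hk (Or.inr (by omega)) h).mpr hx
    omega
  simp only [Ak, fromEdgeSet_adj, Set.mem_union, Set.mem_singleton_iff, Set.mem_ofPred_eq]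
  refine ⟨?_, fun h => by rw [← h] at hx; omega⟩
  rcases lt_trichotomy (x : ℕ) (n - 1) with hx1 | hx1 | hx1
  · exact Or.inr ⟨x + 1, by omega, by omega, Or.inr (by rw [vv_val_add_one])⟩
  · exact Or.inl (Or.inl (by rw [show x = vv n hn n from Fin.ext (by omega), Sym2.eq_swap]))
  · exact Or.inl (Or.inr ⟨2 * n - x, by omega, by omega, Or.inr (by rw [ww_two_mul_sub_val])⟩)

end Ak

namespace IsPlane

variable {n : ℕ} (hn : 0 < n) {G : SimpleGraph (Fin (2 * n))} [DecidableRel G.Adj]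

theorem mem_middle_of_adj_mem_middle (hG : IsPlane G) (hisol : ∀ x, ¬ G.IsIsolated x)
    (hdeg : ∀ x, G.degree x ≤ n) (hmid : G.Adj (vv n hn n) (ww n hn n)) {u v : Fin (2 * n)}
    (huv : G.Adj u v) (hcover : G.IsVertexCover {u, v})
    (hu : u ∈ ({vv n hn n, ww n hn n} : Set _)) : v ∈ ({vv n hn n, ww n hn n} : Set _) := by
  set m₁ := vv n hn n
  set m₂ := ww n hn n
  have hm₁ : (m₁ : ℕ) = n - 1 := val_vv hn (by omega)
  have hm₂ : (m₂ : ℕ) = n := by rw [val_ww hn hn]; omega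
  have hcard : Fintype.card (Fin (2 * n)) = 2 * n := Fintype.card_fin _
  obtain ⟨-, hvu⟩ := degree_eq_and_adj_iff_of_isVertexCover_pair hcard hisol huv hcover
    (hdeg u) (hdeg v)
  obtain ⟨hdv, -⟩ := degree_eq_and_adj_iff_of_isVertexCover_pair hcard hisol huv.symm
    (Set.pair_comm u v ▸ hcover) (hdeg v) (hdeg u)
  by_contra hv
  simp only [Set.mem_insert_iff, Set.mem_singleton_iff, not_or, Fin.ext_iff, hm₁, hm₂] at hv
  -- `v` has all its `n` neighbours on its own side of the middle edge, which has `n + 1` vertices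
  obtain ⟨s, hsub, hs, hm₁s, hm₂s⟩ : ∃ s : Finset (Fin (2 * n)),
      G.neighborFinset v ⊆ s ∧ #s ≤ n ∧ m₁ ∈ s ∧ m₂ ∈ s := by
    rcases Nat.lt_or_gt_of_ne hv.1 with hlt | hgt
    · refine ⟨(Iic m₂).erase v, fun y hy => ?_, ?_, ?_, ?_⟩
      · rw [mem_neighborFinset] at hy
        refine mem_erase.mpr ⟨hy.ne', mem_Iic.mpr (not_lt.mp fun hy' => ?_)⟩
        exact hG.not_adj_of_nested hy (Fin.lt_def.mpr (by omega))
          (Fin.lt_def.mpr (by omega)) hy' hmid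
      · rw [card_erase_of_mem (mem_Iic.mpr (Fin.le_def.mpr (by omega))), Fin.card_Iic]; omega
      all_goals simp only [mem_erase, mem_Iic, Fin.le_def, ne_eq, Fin.ext_iff]; omega
    · refine ⟨(Ici m₁).erase v, fun y hy => ?_, ?_, ?_, ?_⟩
      · rw [mem_neighborFinset] at hy
        refine mem_erase.mpr ⟨hy.ne', mem_Ici.mpr (not_lt.mp fun hy' => ?_)⟩
        exact hG.not_adj_of_nested hy.symm hy' (Fin.lt_def.mpr (by omega))
          (Fin.lt_def.mpr (by omega)) hmid
      · rw [card_erase_of_mem (mem_Ici.mpr (Fin.le_def.mpr (by omega))), Fin.card_Ici]; omega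
      all_goals simp only [mem_erase, mem_Ici, Fin.le_def, ne_eq, Fin.ext_iff]; omega
  have hvm₁ := adj_of_neighborFinset_subset hsub (hs.trans hdv.ge) hm₁s
  have hvm₂ := adj_of_neighborFinset_subset hsub (hs.trans hdv.ge) hm₂s
  rcases hu with rfl | rfl
  · exact (hvu m₂).mp hvm₂ hmid
  · exact (hvu m₁).mp hvm₁ hmid.symm

theorem isVertexCover_middle (hG : IsPlane G) (hisol : ∀ x, ¬ G.IsIsolated x)
    (hdeg : ∀ x, G.degree x ≤ n) (hmid : G.Adj (vv n hn n) (ww n hn n)) {u v : Fin (2 * n)}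
    (huv : G.Adj u v) (hcover : G.IsVertexCover {u, v}) :
    G.IsVertexCover {vv n hn n, ww n hn n} := by
  have hcover' : G.IsVertexCover {v, u} := Set.pair_comm u v ▸ hcover
  have hu : u ∈ ({vv n hn n, ww n hn n} : Set _) ∨ v ∈ ({vv n hn n, ww n hn n} : Set _) := by
    have hmid_cover := hcover hmid
    simp only [Set.mem_insert_iff, Set.mem_singleton_iff] at hmid_cover ⊢
    rcases hmid_cover with (h | h) | (h | h) <;> simp [h]
  have hboth : u ∈ ({vv n hn n, ww n hn n} : Set _) ∧ v ∈ ({vv n hn n, ww n hn n} : Set _) := by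
    rcases hu with hu | hv
    · exact ⟨hu, hG.mem_middle_of_adj_mem_middle hn hisol hdeg hmid huv hcover hu⟩
    · exact ⟨hG.mem_middle_of_adj_mem_middle hn hisol hdeg hmid huv.symm hcover' hv, hv⟩
  exact hcover.subset (Set.insert_subset_iff.mpr ⟨hboth.1, Set.singleton_subset_iff.mpr hboth.2⟩)

theorem exists_eq_Ak (hG : IsPlane G) (hisol : ∀ x, ¬ G.IsIsolated x)
    (hdeg : ∀ x, G.degree x ≤ n) (hmid : G.Adj (vv n hn n) (ww n hn n))
    (hcover : G.IsVertexCover {vv n hn n, ww n hn n}) :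
    ∃ k, 1 ≤ k ∧ k ≤ n ∧ G = Ak n hn k := by
  set m₁ := vv n hn n
  set m₂ := ww n hn n
  have hm₁ : (m₁ : ℕ) = n - 1 := val_vv hn (by omega)
  have hm₂ : (m₂ : ℕ) = n := by rw [val_ww hn hn]; omega
  obtain ⟨hdeg₁, hm₂m₁⟩ := degree_eq_and_adj_iff_of_isVertexCover_pair (Fintype.card_fin _)
    hisol hmid hcover (hdeg m₁) (hdeg m₂)
  -- on each side of the middle edge the neighbours of `m₁` come first, or two edges would nest
  obtain ⟨a, -, ha, hleft⟩ := Fin.exists_forall_iff_val_lt (P := G.Adj m₁) (lo := 0)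
    (hi := n - 1) (by omega) fun x y _ hyx hx hm₁x => by
      by_contra hm₁y
      exact hG.not_adj_of_nested ((hm₂m₁ y).mpr hm₁y).symm hyx (Fin.lt_def.mpr (by omega))
        (Fin.lt_def.mpr (by omega)) hm₁x.symm
  obtain ⟨c, hc, hc', hright⟩ := Fin.exists_forall_iff_val_lt (P := G.Adj m₁) (lo := n + 1)
    (hi := 2 * n) (by omega) fun x y hy hyx _ hm₁x => by
      by_contra hm₁y
      exact hG.not_adj_of_nested hm₁x (Fin.lt_def.mpr (by omega)) (Fin.lt_def.mpr (by omega))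
        hyx ((hm₂m₁ y).mpr hm₁y)
  have hadj₁ : ∀ x, G.Adj m₁ x ↔ (x : ℕ) < a ∨ (n ≤ (x : ℕ) ∧ (x : ℕ) < c) := by
    intro x
    rcases lt_trichotomy (x : ℕ) (n - 1) with hx | hx | hx
    · rw [hleft x (Nat.zero_le _) hx]; omega
    · rw [show x = m₁ from Fin.ext (by omega)]
      simp only [G.irrefl, false_iff]; omega
    · rcases (show (x : ℕ) = n ∨ n + 1 ≤ x by omega) with hx | hx
      · rw [show x = m₂ from Fin.ext (by omega)]
        simp only [hmid, true_iff]; omega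
      · rw [hright x hx x.isLt]; omega
  have hcount : a + (c - n) = n := by
    calc a + (c - n) = #{x : Fin (2 * n) | (x : ℕ) < a ∨ (n ≤ (x : ℕ) ∧ (x : ℕ) < c)} :=
          (Fin.card_filter_val_lt_or_mem_Ico (by omega) (by omega) hc').symm
      _ = G.degree m₁ := by
          rw [← card_neighborFinset_eq_degree]
          congr 1
          ext x
          simp [hadj₁]
      _ = n := hdeg₁
  refine ⟨n - a, by omega, by omega, eq_of_isVertexCover_pair hcover (Ak_isVertexCover hn)
    (fun x => ?_) (fun x => ?_)⟩
  · rw [hadj₁, Ak_adj_vv hn (by omega)]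
    omega
  · rw [hm₂m₁, Ak_adj_ww hn (by omega), hadj₁, Ak_adj_vv hn (by omega)]
    omega

end IsPlane

/-- In any partition of `T_{2n}` into pairwise isomorphic plane spanning trees with
`v_i w_i ∈ E(S_i)`, the last tree `S_n` equals `A_k` for some `1 ≤ k ≤ n`. -/
theorem last_tree_is_Ak
    (n : ℕ) (hn : 0 < n) (S : Fin n → SimpleGraph (Fin (2 * n)))
    (hS : IsTwistedPartition S)
    (hiso : ∀ i j : Fin n, Nonempty ((S i) ≃g (S j)))
    (hc : ∀ i : Fin n, (S i).Adj (vv n hn (i.1 + 1)) (ww n hn (i.1 + 1))) :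
    ∃ k : ℕ, 1 ≤ k ∧ k ≤ n ∧ S ⟨n - 1, by omega⟩ = Ak n hn k := by
  classical
  set first : Fin n := ⟨0, hn⟩
  set last : Fin n := ⟨n - 1, by omega⟩
  obtain ⟨φ⟩ := hiso first last
  have hG : IsPlane (S last) := (hS.1 last).2
  have hfirst : (S first).Adj (vv n hn 1) (ww n hn 1) := hc first
  have hmid : (S last).Adj (vv n hn n) (ww n hn n) := by
    simpa only [last, Nat.sub_add_cancel hn] using hc last
  have hcover : (S last).IsVertexCover {φ (vv n hn 1), φ (ww n hn 1)} := by
    rw [← Set.image_pair, isVertexCover_image_iso]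
    exact (hS.1 first).2.isVertexCover_of_adj_of_isBot_of_isTop hfirst (isBot_vv_one hn)
      (isTop_ww_one hn)
  exact hG.exists_eq_Ak hn (hS.not_isIsolated last) (hS.degree_le last) hmid
    (hG.isVertexCover_middle hn (hS.not_isIsolated last) (hS.degree_le last) hmid
      (φ.map_adj_iff.mpr hfirst) hcover)
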